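/- arXiv:2105.09663 — 2 statements merged into one kernel-verified Lean document; each statement's English description precedes it below -/
import Mathlib

section
/- Consider the involution τ̂₂ of Z² defined by (k, l) ↦ (l, k) and the cone ω = Cone((1,0), (1,2)) in Q². There is no lattice automorphism φ of Z² such that the conjugated involution φ^{-1} ∘ τ̂₂ ∘ φ maps ω onto ω. -/
/-!
An integer matrix `M = P⁻¹ τ P` conjugate to the swap `τ` has trace `0` and determinant `-1`.
If it maps the cone `0 ≤ y ≤ 2x` into itself, then evaluating it on the two generators
`(1,0)` and `(1,2)` forces `M = !![1, 0; 2, -1]`, which is the identity modulo `2`.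
But being the identity modulo `2` is invariant under conjugation, and `τ` is not.
-/

/-- The cone Cone((1,0), (1,2)) in ℚ². -/
def cone16 : Set (Fin 2 → ℚ) :=
  {x | ∃ a b : ℚ, 0 ≤ a ∧ 0 ≤ b ∧ x = a • ![(1 : ℚ), 0] + b • ![(1 : ℚ), 2]}

lemma mem_cone16_iff (x : Fin 2 → ℚ) : x ∈ cone16 ↔ 0 ≤ x 1 ∧ x 1 ≤ 2 * x 0 := by
  constructor
  · rintro ⟨a, b, ha, hb, rfl⟩
    simp only [Pi.add_apply, Pi.smul_apply, Matrix.cons_val_zero, Matrix.cons_val_one,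
      smul_eq_mul]
    constructor <;> linarith
  · rintro ⟨h1, h2⟩
    refine ⟨x 0 - x 1 / 2, x 1 / 2, by linarith, by linarith, ?_⟩
    funext i
    fin_cases i <;> simp

lemma eq_of_trace_det_mapsTo_cone16 {M : Matrix (Fin 2) (Fin 2) ℤ} (htr : M.trace = 0)
    (hdet : M.det = -1)
    (hmaps : Set.MapsTo (Matrix.toLin' (M.map ((↑) : ℤ → ℚ))) cone16 cone16) :
    M = !![1, 0; 2, -1] := by
  have h₁ := hmaps ((mem_cone16_iff ![1, 0]).2 (by norm_num))
  have h₂ := hmaps ((mem_cone16_iff ![1, 2]).2 (by norm_num))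
  simp only [mem_cone16_iff, Matrix.toLin'_apply, Matrix.mulVec, dotProduct, Fin.sum_univ_two,
    Matrix.map_apply, Matrix.cons_val_zero, Matrix.cons_val_one, mul_one, mul_zero,
    add_zero] at h₁ h₂
  have hc : 0 ≤ M 1 0 := by exact_mod_cast h₁.1
  have hca : M 1 0 ≤ 2 * M 0 0 := by exact_mod_cast h₁.2
  have hcd : 0 ≤ M 1 0 + M 1 1 * 2 := by exact_mod_cast h₂.1
  rw [Matrix.trace_fin_two] at htr
  rw [Matrix.det_fin_two] at hdet
  have hc_eq : M 1 0 = 2 * M 0 0 := by omega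
  have hab : M 0 0 * (M 0 0 + 2 * M 0 1) = 1 := by
    rw [show M 1 1 = -M 0 0 by omega, hc_eq] at hdet; linarith
  have ha : M 0 0 = 1 := by
    rcases Int.eq_one_or_neg_one_of_mul_eq_one hab with h | h <;> omega
  have hb : M 0 1 = 0 := by rw [ha] at hab; omega
  ext i j
  fin_cases i <;> fin_cases j <;> simp <;> omega

theorem Matrix.map_eq_one_of_map_conj_eq_one {n R S : Type*} [Fintype n] [DecidableEq n]
    [CommRing R] [Ring S] (f : R →+* S) {P : Matrix n n R} (hP : IsUnit P.det)
    {A : Matrix n n R} (h : (P⁻¹ * A * P).map f = 1) : A.map f = 1 := by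
  have hA : A = P * (P⁻¹ * A * P) * P⁻¹ := by
    rw [← Matrix.mul_assoc, ← Matrix.mul_assoc, Matrix.mul_nonsing_inv P hP, Matrix.one_mul,
      Matrix.mul_assoc, Matrix.mul_nonsing_inv P hP, Matrix.mul_one]
  rw [← f.mapMatrix_apply] at h ⊢
  rw [hA, map_mul, map_mul, h, Matrix.mul_one, ← map_mul, Matrix.mul_nonsing_inv P hP, map_one]

/-- There is no lattice automorphism P ∈ GL₂(ℤ) such that the involution
P⁻¹ ∘ τ̂₂ ∘ P conjugate to the swap involution τ̂₂(k,l) = (l,k) maps the cone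
Cone((1,0),(1,2)) ⊂ ℚ² onto itself. -/
theorem stmt_16 :
    ¬ ∃ P : Matrix (Fin 2) (Fin 2) ℤ, IsUnit P.det ∧
      (⇑(Matrix.toLin' ((P⁻¹ * !![0, 1; 1, 0] * P).map ((↑) : ℤ → ℚ)))) '' cone16
        = cone16 := by
  rintro ⟨P, hP, hcone⟩
  have hunit : IsUnit P := (Matrix.isUnit_iff_isUnit_det P).2 hP
  have hM : P⁻¹ * !![0, 1; 1, 0] * P = !![1, 0; 2, -1] :=
    eq_of_trace_det_mapsTo_cone16 (by simp [Matrix.trace_conj' hunit])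
      (by simp [Matrix.det_conj' hunit]) ((Set.mapsTo_image _ _).mono_right hcone.subset)
  have hmod2 : (!![0, 1; 1, 0] : Matrix (Fin 2) (Fin 2) ℤ).map (Int.castRingHom (ZMod 2)) = 1 :=
    Matrix.map_eq_one_of_map_conj_eq_one _ hP (by rw [hM]; decide)
  exact absurd (congrFun (congrFun hmod2 0) 0) (by decide)
end

section
/- Let Y be a normal semi-projective C-variety with R-structure σ_Y, M a lattice with involution τ̃ , ω^∨ ⊂ M_Q a cone with τ̃(ω^∨)=ω^∨, D an ω-pp-divisor on Y, and h : ω^∨ ∩ M → C(Y)* a monoid morphism satisfying σ_Y*(D(m)) = D(τ̃(m)) + div(h(τ̃(m))) and h(m)·σ_Y#(h(τ̃(m))) = 1 for all m ∈ ω^∨ ∩ M. Then the maps α_m : H⁰(Y,O(D(m))) → H⁰(Y,O(D(τ̃(m)))) given by f ↦ σ_Y#(f)·h(τ̃(m)) are well defined, and ⊕_m α_m is a ring involution of A[Y,D] = ⊕_m H⁰(Y,O(D(m))) that is semilinear over complex conjugation and maps the degree-m part to the degree-τ̃(m) part. -/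
open scoped ComplexConjugate

/-- Global sections H⁰(Y, O(E)) = {f ∈ ℂ(Y)* : div(f) + E ≥ 0} ∪ {0} of a Weil
ℚ-divisor with coefficients E i at the prime divisors indexed by ι. -/
def H0 {K : Type} [Field K] {ι : Type} (ord : K → ι → ℚ) (E : ι → ℚ) : Set K :=
  {f | f = 0 ∨ ∀ i, 0 ≤ ord f i + E i}

/-- Let Y be a normal semi-projective ℂ-variety with ℝ-structure σ_Y (inducing the
semilinear field involution σ of K = ℂ(Y), permuting the prime divisors by π so that
ord(σf) at i equals ord(f) at π i, and pulling back divisors by σ_Y*(E) i = E (π i)),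
let M be a lattice with involution τ̃, S = ω^∨ ∩ M, D an ω-pp-divisor with
superadditive evaluations D(m), and h : S → ℂ(Y)* a monoid morphism with
σ_Y*(D(m)) = D(τ̃ m) + div(h(τ̃ m)) and h(m)·σ(h(τ̃ m)) = 1 for all m ∈ S.
Then the maps α_m : f ↦ σ(f)·h(τ̃ m) are well defined maps
H⁰(O(D(m))) → H⁰(O(D(τ̃ m))), and ⊕ α_m is an involution of A[Y,D] = ⊕ H⁰(O(D(m)))
that is a ring map (multiplicative across the grading), semilinear over complex
conjugation, and maps the degree-m part to the degree-τ̃(m) part. -/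
theorem stmt_19 (M : Type) [AddCommGroup M]
    (τ : M ≃+ M) (hτ : ∀ m, τ (τ m) = m)
    (S : AddSubmonoid M) (hSτ : ∀ m ∈ S, τ m ∈ S)
    (K : Type) [Field K] [Algebra ℂ K]
    (σ : K ≃+* K) (hσinv : ∀ x, σ (σ x) = x)
    (hσsemi : ∀ (c : ℂ) (x : K), σ (algebraMap ℂ K c * x)
      = algebraMap ℂ K (conj c) * σ x)
    (ι : Type) (ord : K → ι → ℚ)
    (hordmul : ∀ f g : K, f ≠ 0 → g ≠ 0 → ord (f * g) = ord f + ord g)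
    (π : ι ≃ ι)
    (hpull : ∀ f : K, f ≠ 0 → ∀ i, ord (σ f) i = ord f (π i))
    (D : M → ι → ℚ)
    (hsuper : ∀ m ∈ S, ∀ m' ∈ S, ∀ i, D m i + D m' i ≤ D (m + m') i)
    (h : M → K) (hne : ∀ m ∈ S, h m ≠ 0)
    (hmul : ∀ m ∈ S, ∀ m' ∈ S, h (m + m') = h m * h m')
    (hdiv : ∀ m ∈ S, ∀ i, D m (π i) = D (τ m) i + ord (h (τ m)) i)
    (hcoc : ∀ m ∈ S, h m * σ (h (τ m)) = 1) :
    (∀ m ∈ S, ∀ f ∈ H0 ord (D m), σ f * h (τ m) ∈ H0 ord (D (τ m))) ∧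
    (∀ m ∈ S, ∀ f : K, σ (σ f * h (τ m)) * h m = f) ∧
    (∀ m ∈ S, ∀ m' ∈ S, ∀ f g : K,
      σ (f * g) * h (τ (m + m')) = (σ f * h (τ m)) * (σ g * h (τ m'))) ∧
    (∀ m ∈ S, ∀ (c : ℂ) (f : K),
      σ (algebraMap ℂ K c * f) * h (τ m)
        = algebraMap ℂ K (conj c) * (σ f * h (τ m))) := by
  refine ⟨?_, ?_, ?_, ?_⟩
  · intro m hm f hf
    rcases hf with hf0 | hf
    · left; rw [hf0]; simp
    · by_cases hf0 : f = 0
      · left; rw [hf0]; simp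
      · right
        intro i
        have hσf : σ f ≠ 0 := fun h' => hf0 (by simpa using congrArg σ.symm h')
        rw [hordmul _ _ hσf (hne _ (hSτ m hm)), Pi.add_apply, hpull f hf0 i]
        have := hdiv m hm i
        have := hf (π i)
        linarith
  · intro m hm f
    have : σ (σ f * h (τ m)) = f * σ (h (τ m)) := by
      rw [map_mul, hσinv]
    rw [this, mul_assoc, mul_comm (σ (h (τ m))), hcoc m hm, mul_one]
  · intro m hm m' hm' f g
    rw [map_add τ, hmul _ (hSτ m hm) _ (hSτ m' hm'), map_mul]
    ring
  · intro m hm c f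
    rw [hσsemi, mul_assoc]
end
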